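/- arXiv:2203.04123 — 3 statements merged into one kernel-verified Lean document; each statement's English description precedes it below -/
import Mathlib

section
/- Let h = (h_1, ..., h_n) be polynomials in K[x_1,...,x_n, e_1,...,e_m] and let α ∈ K^n be a common zero of the polynomials h_i(x, 0,...,0). Assume the Jacobian matrix of (h_1(x,0,...,0),...,h_n(x,0,...,0)) with respect to x_1,...,x_n is invertible at α. Then there exists a unique vector v = (v_1,...,v_n) of formal power series in K[[e_1,...,e_m]] such that v(0,...,0) = α and h_i(v_1,...,v_n, e_1,...,e_m) = 0 in K[[e_1,...,e_m]] for all i = 1,...,n. -/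
/-!
Newton's method with the derivative frozen at `(α, 0)`: with `J` the Jacobian there, the map
`T v = v - J⁻¹ h(v, e)` raises the order of `v - w` by one for tuples `v, w` with constant terms
`α`, since by first-order Taylor expansion `h(v, e) - h(w, e) ≡ J (v - w)` up to terms of higher
order. So the iterates of `T` starting at `α` converge coefficientwise to a fixed point, which is
unique, and the fixed points of `T` are exactly the solutions.
-/

namespace MvPolynomial

variable {τ R A : Type*} [Fintype τ] [CommRing R] [CommRing A] [Algebra R A]

theorem aeval_add_sModEq_sum_pderiv {I : Ideal A} (a b : τ → A) (hb : ∀ s, b s ∈ I)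
    (P : MvPolynomial τ R) :
    aeval (a + b) P ≡ aeval a P + ∑ s, b s * aeval a (pderiv s P) [SMOD I ^ 2] := by
  classical
  induction P using MvPolynomial.induction_on with
  | C c => simp
  | add p q hp hq =>
    simpa only [map_add, mul_add, Finset.sum_add_distrib, add_add_add_comm] using hp.add hq
  | mul_X p i hp =>
    set S := ∑ s, b s * aeval a (pderiv s p)
    have hS : S ∈ I := Ideal.sum_mem _ fun s _ => Ideal.mul_mem_right _ _ (hb s)
    have hsum : ∑ s, b s * aeval a (pderiv s (p * X i)) = S * a i + b i * aeval a p := by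
      simp [S, pderiv_X, Pi.single_apply, mul_add, Finset.sum_add_distrib, Finset.sum_mul,
        apply_ite (aeval a), mul_assoc, add_comm, mul_comm (a i)]
    -- the cross term `S * b i` is the only second-order remainder
    have hsq : S * b i ∈ I ^ 2 := pow_two I ▸ Ideal.mul_mem_mul hS (hb i)
    rw [map_mul, map_mul, aeval_X, aeval_X, hsum]
    refine (hp.mul (SModEq.refl (a i + b i))).trans (SModEq.sub_mem.mpr ?_)
    convert hsq using 1
    ring

end MvPolynomial

namespace MvPowerSeries

variable {σ R : Type*} [CommRing R]

variable (σ R) in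
def orderIdeal (k : ℕ) : Ideal (MvPowerSeries σ R) where
  carrier := {f | k ≤ f.order}
  zero_mem' := by simp
  add_mem' hf hg := le_trans (le_min hf hg) min_order_le_add
  smul_mem' c _ hf := le_trans (by simpa using add_le_add (zero_le (a := c.order)) hf) le_order_mul

theorem mem_orderIdeal {k : ℕ} {f : MvPowerSeries σ R} : f ∈ orderIdeal σ R k ↔ k ≤ f.order :=
  Iff.rfl

theorem orderIdeal_antitone : Antitone (orderIdeal σ R) :=
  fun _ _ hab _ hf => le_trans (by exact_mod_cast hab) (mem_orderIdeal.mp hf)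

theorem orderIdeal_mul_le (a b : ℕ) :
    orderIdeal σ R a * orderIdeal σ R b ≤ orderIdeal σ R (a + b) :=
  Ideal.mul_le.mpr fun _ hf _ hg =>
    le_trans (by push_cast; exact add_le_add hf hg) le_order_mul

theorem mem_orderIdeal_one {f : MvPowerSeries σ R} :
    f ∈ orderIdeal σ R 1 ↔ constantCoeff f = 0 := by
  simpa [mem_orderIdeal] using one_le_order_iff_constCoeff_eq_zero

theorem coeff_eq_zero_of_mem_orderIdeal {k : ℕ} {f : MvPowerSeries σ R}
    (hf : f ∈ orderIdeal σ R k) {d : σ →₀ ℕ} (hd : d.degree < k) : coeff d f = 0 :=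
  coeff_of_lt_order (lt_of_lt_of_le (by exact_mod_cast hd) hf)

theorem eq_zero_of_forall_mem_orderIdeal {f : MvPowerSeries σ R}
    (hf : ∀ k, f ∈ orderIdeal σ R k) : f = 0 :=
  ext fun d => by
    simpa using coeff_eq_zero_of_mem_orderIdeal (hf (d.degree + 1)) (Nat.lt_succ_self _)

/-- The coefficient of degree `d` of `f k` is constant from `k = degree d` on. -/
theorem exists_sub_mem_orderIdeal_of_cauchy (f : ℕ → MvPowerSeries σ R)
    (hf : ∀ k, f (k + 1) - f k ∈ orderIdeal σ R (k + 1)) :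
    ∃ g, ∀ k, g - f k ∈ orderIdeal σ R (k + 1) := by
  have hstable : ∀ d : σ →₀ ℕ, ∀ k, d.degree ≤ k → coeff d (f k) = coeff d (f d.degree) := by
    intro d k hk
    induction k, hk using Nat.le_induction with
    | base => rfl
    | succ k hk ih =>
      rw [← ih, ← sub_eq_zero, ← map_sub]
      exact coeff_eq_zero_of_mem_orderIdeal (hf k) (by omega)
  let g : MvPowerSeries σ R := fun d => coeff d (f d.degree)
  refine ⟨g, fun k => nat_le_order fun d hd => ?_⟩
  rw [map_sub, sub_eq_zero, hstable d k (by omega)]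
  rfl

theorem constantCoeff_aeval {τ : Type*} (a : τ → MvPowerSeries σ R) (P : MvPolynomial τ R) :
    constantCoeff (MvPolynomial.aeval a P) =
      MvPolynomial.aeval (fun s => constantCoeff (a s)) P := by
  induction P using MvPolynomial.induction_on with
  | C c => simp [algebraMap_apply]
  | add p q hp hq => simp [hp, hq]
  | mul_X p i hp => simp [hp]

theorem aeval_add_sModEq_of_mem_orderIdeal {τ : Type*} [Fintype τ] (a b : τ → MvPowerSeries σ R)
    {k : ℕ} (hk : 1 ≤ k) (hb : ∀ s, b s ∈ orderIdeal σ R k) (P : MvPolynomial τ R) :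
    MvPolynomial.aeval (a + b) P ≡ MvPolynomial.aeval a P +
        ∑ s, C (MvPolynomial.aeval (fun s => constantCoeff (a s)) (MvPolynomial.pderiv s P)) * b s
      [SMOD orderIdeal σ R (k + 1)] := by
  have hsq : orderIdeal σ R k ^ 2 ≤ orderIdeal σ R (k + 1) :=
    (pow_two (orderIdeal σ R k)).trans_le
      ((orderIdeal_mul_le k k).trans (orderIdeal_antitone (by omega)))
  refine ((MvPolynomial.aeval_add_sModEq_sum_pderiv a b hb P).mono hsq).trans
    (SModEq.rfl.add (SModEq.sum fun s _ => SModEq.sub_mem.mpr ?_))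
  have hconst : MvPolynomial.aeval a (MvPolynomial.pderiv s P) -
      C (MvPolynomial.aeval (fun s => constantCoeff (a s)) (MvPolynomial.pderiv s P))
        ∈ orderIdeal σ R 1 := by
    rw [mem_orderIdeal_one, map_sub, constantCoeff_aeval, constantCoeff_C, sub_self]
  convert orderIdeal_mul_le k 1 (Ideal.mul_mem_mul (hb s) hconst) using 1
  ring

section FixedPoint

variable {ι : Type*}

variable (ι σ R) in
noncomputable abbrev piOrderIdeal (k : ℕ) : Ideal (ι → MvPowerSeries σ R) :=
  Ideal.pi fun _ => orderIdeal σ R k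

theorem piOrderIdeal_antitone : Antitone (piOrderIdeal σ R ι) :=
  fun _ _ hab _ hv j => orderIdeal_antitone hab (hv j)

theorem eq_of_forall_sModEq_piOrderIdeal {v w : ι → MvPowerSeries σ R}
    (h : ∀ k, v ≡ w [SMOD piOrderIdeal σ R ι (k + 1)]) : v = w :=
  funext fun j => sub_eq_zero.mp <| eq_zero_of_forall_mem_orderIdeal fun k =>
    orderIdeal_antitone k.le_succ ((SModEq.sub_mem.mp (h k)) j)

theorem exists_sModEq_piOrderIdeal_of_cauchy (f : ℕ → ι → MvPowerSeries σ R)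
    (hf : ∀ k, f (k + 1) ≡ f k [SMOD piOrderIdeal σ R ι (k + 1)]) :
    ∃ g, ∀ k, g ≡ f k [SMOD piOrderIdeal σ R ι (k + 1)] := by
  choose g hg using fun j =>
    exists_sub_mem_orderIdeal_of_cauchy (fun k => f k j) fun k => SModEq.sub_mem.mp (hf k) j
  exact ⟨g, fun k => SModEq.sub_mem.mpr fun j => hg j k⟩

/-- Banach's fixed point argument for the order filtration. -/
theorem existsUnique_fixedPoint_of_contracting
    (T : (ι → MvPowerSeries σ R) → ι → MvPowerSeries σ R)
    (v₀ : ι → MvPowerSeries σ R) (h₀ : T v₀ ≡ v₀ [SMOD piOrderIdeal σ R ι 1])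
    (hT : ∀ k v w, v ≡ v₀ [SMOD piOrderIdeal σ R ι 1] → w ≡ v₀ [SMOD piOrderIdeal σ R ι 1] →
      v ≡ w [SMOD piOrderIdeal σ R ι (k + 1)] → T v ≡ T w [SMOD piOrderIdeal σ R ι (k + 2)]) :
    ∃! v, v ≡ v₀ [SMOD piOrderIdeal σ R ι 1] ∧ T v = v := by
  have hmaps : ∀ v, v ≡ v₀ [SMOD piOrderIdeal σ R ι 1] → T v ≡ v₀ [SMOD piOrderIdeal σ R ι 1] :=
    fun v hv => ((hT 0 v v₀ hv .rfl hv).mono (piOrderIdeal_antitone (by omega))).trans h₀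
  have hiter : ∀ k, T^[k] v₀ ≡ v₀ [SMOD piOrderIdeal σ R ι 1] := by
    intro k
    induction k with
    | zero => exact .rfl
    | succ k ih => rw [Function.iterate_succ_apply']; exact hmaps _ ih
  have hcauchy : ∀ k, T^[k + 1] v₀ ≡ T^[k] v₀ [SMOD piOrderIdeal σ R ι (k + 1)] := by
    intro k
    induction k with
    | zero => exact h₀
    | succ k ih =>
      have hstep := hT k _ _ (hiter (k + 1)) (hiter k) ih
      rwa [← Function.iterate_succ_apply' T (k + 1), ← Function.iterate_succ_apply' T k] at hstep
  obtain ⟨V, hV⟩ := exists_sModEq_piOrderIdeal_of_cauchy (fun k => T^[k] v₀) hcauchy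
  have hVfix : T V = V := eq_of_forall_sModEq_piOrderIdeal fun k => by
    have hstep := hT k V _ (hV 0) (hiter k) (hV k)
    rw [← Function.iterate_succ_apply' T k] at hstep
    exact (hstep.trans (hV (k + 1)).symm).mono (piOrderIdeal_antitone k.succ.le_succ)
  refine ⟨V, ⟨hV 0, hVfix⟩, fun w ⟨hw, hTw⟩ => eq_of_forall_sModEq_piOrderIdeal fun k => ?_⟩
  induction k with
  | zero => exact hw.trans (hV 0).symm
  | succ k ih => simpa only [hTw, hVfix] using hT k w V hw (hV 0) ih

theorem sModEq_C_piOrderIdeal_one_iff {α : ι → R} {v : ι → MvPowerSeries σ R} :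
    v ≡ (fun j => C (α j)) [SMOD piOrderIdeal σ R ι 1] ↔ ∀ j, constantCoeff (v j) = α j := by
  simp [SModEq.sub_mem, Ideal.mem_pi, mem_orderIdeal_one, sub_eq_zero]

end FixedPoint

end MvPowerSeries

open Matrix in
theorem SModEq.mulVec_pi {A m n : Type*} [CommRing A] [Fintype n] {I : Ideal A}
    (M : Matrix m n A) {x y : n → A} (hxy : x ≡ y [SMOD Ideal.pi fun _ => I]) :
    M *ᵥ x ≡ M *ᵥ y [SMOD Ideal.pi fun _ => I] := by
  rw [SModEq.sub_mem, ← Matrix.mulVec_sub]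
  exact fun i => Ideal.sum_mem _ fun j _ => I.mul_mem_left _ (SModEq.sub_mem.mp hxy j)

section ImplicitFunction

open MvPolynomial Matrix

variable {ι σ R : Type*} [CommRing R] (h : ι → MvPolynomial (ι ⊕ σ) R)

noncomputable def evalAtX (v : ι → MvPowerSeries σ R) : ι → MvPowerSeries σ R :=
  fun i => aeval (Sum.elim v MvPowerSeries.X) (h i)

noncomputable def jacobianInl (p : ι ⊕ σ → R) : Matrix ι ι R :=
  Matrix.of fun i j => aeval p (pderiv (Sum.inl j) (h i))

noncomputable def newtonMap [Fintype ι] (B : Matrix ι ι R) (v : ι → MvPowerSeries σ R) :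
    ι → MvPowerSeries σ R :=
  v - B.map MvPowerSeries.C *ᵥ evalAtX h v

theorem evalAtX_sModEq_add_jacobianInl_mulVec [Fintype ι] [Fintype σ] {α : ι → R}
    {v w : ι → MvPowerSeries σ R} (hw : ∀ j, MvPowerSeries.constantCoeff (w j) = α j)
    {k : ℕ} (hk : 1 ≤ k) (hvw : v ≡ w [SMOD MvPowerSeries.piOrderIdeal σ R ι k]) :
    evalAtX h v ≡ evalAtX h w + (jacobianInl h (Sum.elim α 0)).map MvPowerSeries.C *ᵥ (v - w)
      [SMOD MvPowerSeries.piOrderIdeal σ R ι (k + 1)] := by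
  have hb : ∀ s, Sum.elim (v - w) (0 : σ → MvPowerSeries σ R) s ∈
      MvPowerSeries.orderIdeal σ R k := by
    rintro (j | s)
    exacts [SModEq.sub_mem.mp hvw j, zero_mem _]
  have hadd : Sum.elim w MvPowerSeries.X + Sum.elim (v - w) (0 : σ → MvPowerSeries σ R) =
      Sum.elim v MvPowerSeries.X := by
    ext (j | s) : 1 <;> simp
  have hconst : (fun s => MvPowerSeries.constantCoeff (Sum.elim w MvPowerSeries.X s))
      = Sum.elim α (0 : σ → R) := by
    ext (j | s) <;> simp [hw]
  refine SModEq.sub_mem.mpr fun i => SModEq.sub_mem.mp ?_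
  have htaylor :=
    MvPowerSeries.aeval_add_sModEq_of_mem_orderIdeal (Sum.elim w MvPowerSeries.X) _ hk hb (h i)
  rw [hadd, hconst, Fintype.sum_sum_type] at htaylor
  simpa [evalAtX, jacobianInl, Matrix.mulVec, dotProduct] using htaylor

theorem constantCoeff_evalAtX {α : ι → R} {w : ι → MvPowerSeries σ R}
    (hw : ∀ j, MvPowerSeries.constantCoeff (w j) = α j) (i : ι) :
    MvPowerSeries.constantCoeff (evalAtX h w i) = aeval (Sum.elim α 0) (h i) := by
  rw [evalAtX, MvPowerSeries.constantCoeff_aeval]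
  congr
  ext (j | s) <;> simp [hw]

theorem newtonMap_C_sModEq [Fintype ι] {B : Matrix ι ι R} {α : ι → R}
    (hroot : ∀ i, aeval (Sum.elim α (0 : σ → R)) (h i) = 0) :
    newtonMap h B (fun j => MvPowerSeries.C (α j)) ≡ fun j => MvPowerSeries.C (α j)
      [SMOD MvPowerSeries.piOrderIdeal σ R ι 1] := by
  have hroot' : evalAtX h (fun j => MvPowerSeries.C (α j)) ≡ 0
      [SMOD MvPowerSeries.piOrderIdeal σ R ι 1] :=
    SModEq.zero.mpr fun i => MvPowerSeries.mem_orderIdeal_one.mpr <| by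
      rw [constantCoeff_evalAtX h (α := α) (by simp), hroot]
  simpa [newtonMap] using SModEq.rfl.sub (hroot'.mulVec_pi (B.map MvPowerSeries.C))

theorem newtonMap_sModEq_of_sModEq [Fintype ι] [DecidableEq ι] [Fintype σ]
    {B : Matrix ι ι R} {α : ι → R} (hBJ : B * jacobianInl h (Sum.elim α 0) = 1)
    {v w : ι → MvPowerSeries σ R} (hw : ∀ j, MvPowerSeries.constantCoeff (w j) = α j) {k : ℕ}
    (hvw : v ≡ w [SMOD MvPowerSeries.piOrderIdeal σ R ι (k + 1)]) :
    newtonMap h B v ≡ newtonMap h B w [SMOD MvPowerSeries.piOrderIdeal σ R ι (k + 2)] :=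
  calc newtonMap h B v
    _ ≡ v - B.map MvPowerSeries.C *ᵥ
          (evalAtX h w + (jacobianInl h (Sum.elim α 0)).map MvPowerSeries.C *ᵥ (v - w))
        [SMOD MvPowerSeries.piOrderIdeal σ R ι (k + 2)] :=
      SModEq.rfl.sub ((evalAtX_sModEq_add_jacobianInl_mulVec h hw (by omega) hvw).mulVec_pi _)
    _ = newtonMap h B w := by
      rw [mulVec_add, mulVec_mulVec, ← Matrix.map_mul, hBJ,
        Matrix.map_one _ (map_zero _) (map_one _), one_mulVec, newtonMap]
      abel

theorem newtonMap_eq_self_iff [Fintype ι] [DecidableEq ι] {B J : Matrix ι ι R} (hJB : J * B = 1)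
    {v : ι → MvPowerSeries σ R} : newtonMap h B v = v ↔ evalAtX h v = 0 := by
  refine sub_eq_self.trans ⟨fun hv => ?_, fun hv => by rw [hv, mulVec_zero]⟩
  rw [← one_mulVec (evalAtX h v), ← Matrix.map_one _ (map_zero MvPowerSeries.C) (map_one _),
    ← hJB, Matrix.map_mul, ← mulVec_mulVec, hv, mulVec_zero]

end ImplicitFunction

theorem stmt_1 {K : Type*} [Field K] {n m : ℕ}
    (h : Fin n → MvPolynomial (Fin n ⊕ Fin m) K)
    (α : Fin n → K)
    (hroot : ∀ i, MvPolynomial.aeval (Sum.elim α (0 : Fin m → K)) (h i) = 0)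
    (hjac : IsUnit (Matrix.det (Matrix.of fun i j =>
      MvPolynomial.aeval (Sum.elim α (0 : Fin m → K))
        (MvPolynomial.pderiv (Sum.inl j) (h i))))) :
    ∃! v : Fin n → MvPowerSeries (Fin m) K,
      (∀ i, MvPowerSeries.constantCoeff (v i) = α i) ∧
      (∀ i, MvPolynomial.aeval
        (Sum.elim v (MvPowerSeries.X : Fin m → MvPowerSeries (Fin m) K)) (h i) = 0) := by
  set J := jacobianInl h (Sum.elim α 0)
  refine (existsUnique_congr fun v => ?_).mp <|
    MvPowerSeries.existsUnique_fixedPoint_of_contracting (newtonMap h J⁻¹) _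
      (newtonMap_C_sModEq h hroot) fun k v w _ hw hvw =>
        newtonMap_sModEq_of_sModEq h (Matrix.nonsing_inv_mul J hjac)
          (MvPowerSeries.sModEq_C_piOrderIdeal_one_iff.mp hw) hvw
  rw [MvPowerSeries.sModEq_C_piOrderIdeal_one_iff,
    newtonMap_eq_self_iff h (Matrix.mul_nonsing_inv J hjac), funext_iff]
  rfl
end

section
/- Let K be a field, h ∈ K[x_1,...,x_n, e_1,...,e_m]^n, α a root of h(x,0) with invertible Jacobian of h(x,0) w.r.t. x at α, and let v, w ∈ K[[e_1,...,e_m]]^n both satisfy v(0)=w(0)=α and h(v,e)=h(w,e)=0. Then v = w. (Uniqueness part of the Hensel lifting.) -/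
/-!
If `h(v) = h(w) = 0`, first-order Taylor expansion of `h` at `v` gives
`J(v) (w - v) ≡ 0` modulo `I²`, where `I` is the ideal generated by the entries of `w - v`.
The Jacobian `J(v)` is invertible, its constant term being the invertible Jacobian at `α`,
so `I ≤ I²`. Since `v` and `w` have the same constant terms, `I` lies in the Jacobson radical,
and Nakayama's lemma gives `I = 0`.
-/

open MvPolynomial Matrix

theorem MvPolynomial.aeval_add_sub_sub_sum_pderiv_mem_sq {R S σ : Type*} [CommSemiring R]
    [CommRing S] [Algebra R S] [Fintype σ] (p : MvPolynomial σ R) (x δ : σ → S)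
    {I : Ideal S} (hδ : ∀ i, δ i ∈ I) :
    aeval (x + δ) p - aeval x p - ∑ i, aeval x (pderiv i p) * δ i ∈ I ^ 2 := by
  classical
  induction p using MvPolynomial.induction_on with
  | C a => simp
  | add p q hp hq =>
    convert add_mem hp hq using 1
    simp only [map_add, add_mul, Finset.sum_add_distrib]
    ring
  | mul_X p j ih =>
    set L := ∑ i, aeval x (pderiv i p) * δ i with hL
    have hsplit : aeval (x + δ) (p * X j) - aeval x (p * X j)
        - ∑ i, aeval x (pderiv i (p * X j)) * δ i
        = (aeval (x + δ) p - aeval x p - L) * (x j + δ j) + L * δ j := by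
      simp only [map_mul, aeval_X, Pi.add_apply, Derivation.leibniz, pderiv_X, smul_eq_mul,
        map_add, Pi.single_apply, apply_ite (aeval x), map_zero, mul_ite, mul_one, mul_zero,
        add_mul, ite_mul, zero_mul, Finset.sum_add_distrib, Finset.sum_ite_eq, Finset.mem_univ,
        if_true, mul_assoc, ← Finset.mul_sum, hL]
      ring
    have hL_mem : L ∈ I := Ideal.sum_mem _ fun i _ => Ideal.mul_mem_left _ _ (hδ i)
    rw [hsplit]
    exact add_mem (Ideal.mul_mem_right _ _ ih) (pow_two I ▸ Ideal.mul_mem_mul hL_mem (hδ j))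

theorem Matrix.mem_of_isUnit_det_of_mulVec_mem {R ι : Type*} [CommRing R] [Fintype ι]
    [DecidableEq ι] {A : Matrix ι ι R} (hA : IsUnit A.det) {v : ι → R} {I : Ideal R}
    (hAv : ∀ i, (A *ᵥ v) i ∈ I) (i : ι) : v i ∈ I := by
  rw [← Matrix.one_mulVec v, ← Matrix.nonsing_inv_mul A hA, ← Matrix.mulVec_mulVec]
  exact Ideal.sum_mem _ fun j _ => Ideal.mul_mem_left _ _ (hAv j)

theorem Ideal.eq_bot_of_le_sq_of_le_jacobson_bot {R : Type*} [CommRing R] {I : Ideal R}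
    (hfg : I.FG) (hsq : I ≤ I ^ 2) (hjac : I ≤ jacobson ⊥) : I = ⊥ :=
  Submodule.eq_bot_of_le_smul_of_le_jacobson_bot I I hfg (by rwa [smul_eq_mul, ← pow_two]) hjac

theorem eq_of_aeval_eq_zero_of_isUnit_det_jacobian {R S ι σ : Type*} [CommSemiring R]
    [CommRing S] [Algebra R S] [Fintype ι] [DecidableEq ι] [Fintype σ]
    (f : ι → MvPolynomial (ι ⊕ σ) R) (x y : ι → S) (z : σ → S)
    (hdet : IsUnit (Matrix.of fun i j => aeval (Sum.elim x z) (pderiv (Sum.inl j) (f i))).det)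
    (hxy : ∀ i, y i - x i ∈ Ideal.jacobson ⊥)
    (hx : ∀ i, aeval (Sum.elim x z) (f i) = 0) (hy : ∀ i, aeval (Sum.elim y z) (f i) = 0) :
    x = y := by
  set J := Matrix.of fun i j => aeval (Sum.elim x z) (pderiv (Sum.inl j) (f i))
  set I := Ideal.span (Set.range (y - x))
  have hyx : Sum.elim x z + Sum.elim (y - x) 0 = Sum.elim y z := by
    ext (i | k) <;> simp
  have hlin : ∀ i, (J *ᵥ (y - x)) i ∈ I ^ 2 := by
    intro i
    have htaylor := (f i).aeval_add_sub_sub_sum_pderiv_mem_sq (Sum.elim x z) (Sum.elim (y - x) 0)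
      (I := I) (by rintro (j | k); exacts [Ideal.subset_span ⟨j, rfl⟩, zero_mem I])
    rw [hyx, hx, hy, Fintype.sum_sum_type] at htaylor
    simpa [J, Matrix.mulVec, dotProduct] using htaylor
  have hI : I = ⊥ := Ideal.eq_bot_of_le_sq_of_le_jacobson_bot
    (Submodule.fg_span (Set.finite_range _))
    (Ideal.span_le.mpr <| Set.range_subset_iff.mpr
      (Matrix.mem_of_isUnit_det_of_mulVec_mem hdet hlin))
    (Ideal.span_le.mpr <| Set.range_subset_iff.mpr hxy)
  funext i
  have hmem : y i - x i ∈ I := Ideal.subset_span ⟨i, rfl⟩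
  rw [hI, Ideal.mem_bot, sub_eq_zero] at hmem
  exact hmem.symm

theorem MvPowerSeries.constantCoeff_aeval_s17 {R σ τ : Type*} [CommSemiring R]
    (g : τ → MvPowerSeries σ R) (p : MvPolynomial τ R) :
    constantCoeff (MvPolynomial.aeval g p)
      = MvPolynomial.aeval (fun t => constantCoeff (g t)) p := by
  rw [MvPolynomial.map_aeval]; rfl

theorem MvPowerSeries.mem_jacobson_bot_of_constantCoeff_eq_zero {R σ : Type*} [CommRing R]
    {φ : MvPowerSeries σ R} (hφ : constantCoeff φ = 0) : φ ∈ Ideal.jacobson ⊥ :=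
  Ideal.mem_jacobson_bot.mpr fun ψ => by
    simp [MvPowerSeries.isUnit_iff_constantCoeff, hφ]

theorem stmt_17_general {K : Type*} [Field K] {n m : ℕ}
    (h : Fin n → MvPolynomial (Fin n ⊕ Fin m) K)
    (α : Fin n → K)
    (hjac : IsUnit (Matrix.det (Matrix.of fun i j =>
      MvPolynomial.aeval (Sum.elim α (0 : Fin m → K))
        (MvPolynomial.pderiv (Sum.inl j) (h i)))))
    (v w : Fin n → MvPowerSeries (Fin m) K)
    (hv0 : ∀ i, MvPowerSeries.constantCoeff (v i) = α i)
    (hw0 : ∀ i, MvPowerSeries.constantCoeff (w i) = α i)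
    (hv : ∀ i, MvPolynomial.aeval
      (Sum.elim v (MvPowerSeries.X : Fin m → MvPowerSeries (Fin m) K)) (h i) = 0)
    (hw : ∀ i, MvPolynomial.aeval
      (Sum.elim w (MvPowerSeries.X : Fin m → MvPowerSeries (Fin m) K)) (h i) = 0) :
    v = w := by
  have hcc : (fun k => MvPowerSeries.constantCoeff (Sum.elim v MvPowerSeries.X k))
      = Sum.elim α (0 : Fin m → K) := by
    ext (i | k) <;> simp [hv0]
  refine eq_of_aeval_eq_zero_of_isUnit_det_jacobian h v w MvPowerSeries.X ?_ ?_ hv hw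
  · rw [MvPowerSeries.isUnit_iff_constantCoeff, RingHom.map_det]
    convert hjac using 3
    ext i j
    simp only [RingHom.mapMatrix_apply, Matrix.map_apply, Matrix.of_apply,
      MvPowerSeries.constantCoeff_aeval_s17, hcc]
  · intro i
    exact MvPowerSeries.mem_jacobson_bot_of_constantCoeff_eq_zero (by simp [hv0, hw0])

theorem stmt_17 {K : Type*} [Field K] {n m : ℕ}
    (h : Fin n → MvPolynomial (Fin n ⊕ Fin m) K)
    (α : Fin n → K)
    (hroot : ∀ i, MvPolynomial.aeval (Sum.elim α (0 : Fin m → K)) (h i) = 0)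
    (hjac : IsUnit (Matrix.det (Matrix.of fun i j =>
      MvPolynomial.aeval (Sum.elim α (0 : Fin m → K))
        (MvPolynomial.pderiv (Sum.inl j) (h i)))))
    (v w : Fin n → MvPowerSeries (Fin m) K)
    (hv0 : ∀ i, MvPowerSeries.constantCoeff (v i) = α i)
    (hw0 : ∀ i, MvPowerSeries.constantCoeff (w i) = α i)
    (hv : ∀ i, MvPolynomial.aeval
      (Sum.elim v (MvPowerSeries.X : Fin m → MvPowerSeries (Fin m) K)) (h i) = 0)
    (hw : ∀ i, MvPolynomial.aeval
      (Sum.elim w (MvPowerSeries.X : Fin m → MvPowerSeries (Fin m) K)) (h i) = 0) :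
    v = w :=
  stmt_17_general h α hjac v w hv0 hw0 hv hw
end

section
/- Let K be a field of characteristic zero and let u_1,...,u_n ∈ K[x_1,...,x_n] be algebraically independent over K. Then there exists a point α ∈ K̄^n (K̄ an algebraic closure) such that the Jacobian matrix of the shifted system (u_1 - e_1 - u_1(α), ..., u_n - e_n - u_n(α)), with respect to (x_1,...,x_n) and after setting e_1 = ... = e_n = 0, is invertible at α; moreover α is a root of this shifted system with e = 0. Consequently the Hensel lifting hypothesis can always be satisfied after a generic shift. -/
/-!
If the Jacobian determinant of `u` vanished, a nonzero kernel vector `w` of the Jacobian matrix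
would give a derivation `D = ∑ⱼ wⱼ ∂ⱼ` killing every `uᵢ`, hence all of `K[u]`. Since `u` is a
transcendence basis, each `xᵢ` is algebraic over `K[u]`, and in characteristic zero it is a root
of some `p` with `p'(xᵢ) ≠ 0`; applying `D` to `p(xᵢ) = 0` gives `p'(xᵢ) · D xᵢ = 0`, so
`wᵢ = D xᵢ = 0`. A nonzero polynomial then has a non-root over the infinite field `K̄`.
-/

open Polynomial in
theorem Derivation.apply_eq_zero_of_aeval_eq_zero {R A B : Type*} [CommRing R] [CommRing A]
    [CommRing B] [NoZeroDivisors B] [Algebra R A] [Algebra R B] [Algebra A B]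
    [IsScalarTower R A B] (D : Derivation R B B) (hD : ∀ a : A, D (algebraMap A B a) = 0)
    {x : B} {p : A[X]} (hp : aeval x p = 0) (hp' : aeval x (derivative p) ≠ 0) : D x = 0 := by
  have hcoeffs : (D.compAlgebraMap A).mapCoeffs p = 0 := by
    ext i
    exact hD _
  have hchain := D.apply_aeval_eq x p
  rw [hp, D.map_zero, hcoeffs, map_zero, map_zero, zero_add, smul_eq_mul] at hchain
  exact (mul_eq_zero.mp hchain.symm).resolve_left hp'

open Polynomial in
theorem IsAlgebraic.exists_aeval_eq_zero_aeval_derivative_ne_zero {A B : Type*} [CommRing A]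
    [CommRing B] [Algebra A B] [FaithfulSMul A B] [IsAddTorsionFree A] {x : B}
    (hx : IsAlgebraic A x) : ∃ p : A[X], aeval x p = 0 ∧ aeval x (derivative p) ≠ 0 := by
  obtain ⟨p, hp0, hpx⟩ := hx
  induction h : p.natDegree using Nat.strong_induction_on generalizing p with
  | _ d ih =>
    by_cases hp' : aeval x (derivative p) = 0
    · have hd : p.natDegree ≠ 0 := by
        intro hd
        rw [eq_C_of_natDegree_eq_zero hd, aeval_C,
          map_eq_zero_iff _ (FaithfulSMul.algebraMap_injective A B)] at hpx
        exact hp0 (leadingCoeff_eq_zero.mp (by rwa [leadingCoeff, hd]))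
      exact ih _ (h ▸ natDegree_derivative_lt hd) _ (derivative_ne_zero.mpr hd) hp' rfl
    · exact ⟨p, hpx, hp'⟩

namespace MvPolynomial

variable {R : Type*} [CommRing R] {σ : Type*}

noncomputable def jacobian (u : σ → MvPolynomial σ R) : Matrix σ σ (MvPolynomial σ R) :=
  Matrix.of fun i j => pderiv j (u i)

theorem isAlgebraic_adjoin_range_of_algebraicIndependent [IsDomain R] [Finite σ]
    {u : σ → MvPolynomial σ R} (hu : AlgebraicIndependent R u) :
    Algebra.IsAlgebraic (Algebra.adjoin R (Set.range u)) (MvPolynomial σ R) :=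
  (hu.isTranscendenceBasis_of_lift_trdeg_le_of_finite (by simp)).isAlgebraic

theorem exists_aeval_ne_zero {L : Type*} [CommRing L] [IsDomain L] [Infinite L] [Algebra R L]
    [FaithfulSMul R L] {p : MvPolynomial σ R} (hp : p ≠ 0) : ∃ α : σ → L, aeval α p ≠ 0 := by
  by_contra! h
  refine hp (map_injective _ (FaithfulSMul.algebraMap_injective R L) (funext fun α => ?_))
  simpa [eval_map, ← aeval_def] using h α

theorem det_jacobian_ne_zero_of_algebraicIndependent [IsDomain R] [CharZero R] [Fintype σ]
    [DecidableEq σ] {u : σ → MvPolynomial σ R} (hu : AlgebraicIndependent R u) :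
    (jacobian u).det ≠ 0 := by
  intro hdet
  obtain ⟨w, hw0, hJw⟩ := Matrix.exists_mulVec_eq_zero_iff.mpr hdet
  let D : Derivation R (MvPolynomial σ R) (MvPolynomial σ R) := ∑ j, w j • pderiv j
  have hD : ∀ p, D p = ∑ j, w j * pderiv j p := fun p => by
    simp only [D, ← Derivation.coeFnAddMonoidHom_apply, map_sum, Finset.sum_apply]
    simp [Derivation.coeFnAddMonoidHom_apply]
  have hDu : ∀ i, D (u i) = 0 := fun i => by
    simpa [hD, jacobian, Matrix.mulVec, dotProduct, mul_comm] using congrFun hJw i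
  have hDA : ∀ a : Algebra.adjoin R (Set.range u), D a = 0 := fun a =>
    Derivation.eqOn_adjoin (D2 := 0) (by rintro _ ⟨i, rfl⟩; exact hDu i) a.2
  have halg := isAlgebraic_adjoin_range_of_algebraicIndependent hu
  refine hw0 (_root_.funext fun i => ?_)
  obtain ⟨p, hp, hp'⟩ := (halg.isAlgebraic (X i)).exists_aeval_eq_zero_aeval_derivative_ne_zero
  have hDX := D.apply_eq_zero_of_aeval_eq_zero hDA hp hp'
  simpa [hD, pderiv_X, Pi.single_apply] using hDX

end MvPolynomial

theorem stmt_18 {K : Type*} [Field K] [CharZero K] {n : ℕ}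
    (u : Fin n → MvPolynomial (Fin n) K)
    (hu : AlgebraicIndependent K u) :
    ∃ α : Fin n → AlgebraicClosure K,
      (∀ i, MvPolynomial.aeval α (u i) - MvPolynomial.aeval α (u i) = 0) ∧
      IsUnit (Matrix.det (Matrix.of fun i j =>
        MvPolynomial.aeval α (MvPolynomial.pderiv j (u i)))) := by
  obtain ⟨α, hα⟩ := MvPolynomial.exists_aeval_ne_zero (L := AlgebraicClosure K)
    (MvPolynomial.det_jacobian_ne_zero_of_algebraicIndependent hu)
  refine ⟨α, fun i => sub_self _, isUnit_iff_ne_zero.mpr ?_⟩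
  rwa [AlgHom.map_det] at hα
end
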